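/- arXiv:1508.03984 — 3 statements merged into one kernel-verified Lean document; each statement's English description precedes it below -/
import Mathlib

section
/- If (D_n) is a sequence of mutually disjoint lateral ideals in a vector lattice E, then the set L of all finite sums x_1 + ⋯ + x_k with pairwise disjoint x_i, where x_i ∈ D_{n_i} for distinct indices n_1,…,n_k, is again a lateral ideal. -/
variable {E : Type*} [Lattice E] [AddCommGroup E]
  [CovariantClass E E (· + ·) (· ≤ ·)] [Module ℝ E]

/-- `z` is a fragment of `x`: `|z| ⊓ |x - z| = 0`. -/
def IsFragment (z x : E) : Prop := |z| ⊓ |x - z| = 0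

/-- A lateral ideal: contains all fragments of its elements and is closed under
sums of disjoint elements. -/
def IsLateralIdeal (D : Set E) : Prop :=
  (∀ x ∈ D, ∀ y : E, IsFragment y x → y ∈ D) ∧
  (∀ x ∈ D, ∀ y ∈ D, |x| ⊓ |y| = 0 → x + y ∈ D)

/-! ### Auxiliary lemmas on lattice-ordered groups -/

private lemma posPart_le_abs' (a : E) : a⁺ ≤ |a| := by
  rw [← posPart_add_negPart a]; exact le_add_of_nonneg_right (negPart_nonneg a)

private lemma negPart_le_abs' (a : E) : a⁻ ≤ |a| := by
  rw [← posPart_add_negPart a]; exact le_add_of_nonneg_left (posPart_nonneg a)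

private lemma abs_eq_zero' {a : E} (h : |a| = 0) : a = 0 := by
  have h1 : a ≤ 0 := h ▸ le_abs_self a
  have h2 : -a ≤ 0 := h ▸ neg_le_abs a
  exact le_antisymm h1 (by simpa using h2)

private lemma inf_eq_zero_of_le {a b c d : E} (ha : 0 ≤ a) (hb : 0 ≤ b)
    (h1 : a ≤ c) (h2 : b ≤ d) (h : c ⊓ d = 0) : a ⊓ b = 0 :=
  le_antisymm (le_trans (inf_le_inf h1 h2) h.le) (le_inf ha hb)

private lemma posPart_add_disj {a b : E} (h : |a| ⊓ |b| = 0) : (a + b)⁺ = a⁺ + b⁺ := by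
  have key : ∀ c d : E, |c| ⊓ |d| = 0 → c ≤ (c + d) ⊔ 0 := by
    intro c d hcd
    have h1 : c ⊓ (-d) ≤ 0 := le_trans (inf_le_inf (le_abs_self c) (neg_le_abs d)) hcd.le
    have h2 : (0 : E) ≤ -c ⊔ d := by
      have h3 : -(-c ⊔ d) ≤ 0 := by rw [neg_sup, neg_neg]; exact h1
      simpa using neg_nonpos.mp h3
    have h3 : c ≤ c + (-c ⊔ d) := by simpa using add_le_add_left h2 c
    calc c ≤ c + (-c ⊔ d) := h3
      _ = (c + -c) ⊔ (c + d) := add_sup _ _ _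
      _ = (c + d) ⊔ 0 := by rw [add_neg_cancel, sup_comm]
  have ha := key a b h
  have hb' := key b a (by rwa [inf_comm] at h)
  rw [add_comm b a] at hb'
  have goal : (a + b) ⊔ (0 : E) = (a ⊔ 0) + (b ⊔ 0) := by
    apply le_antisymm
    · exact sup_le (add_le_add le_sup_left le_sup_left)
        (add_nonneg le_sup_right le_sup_right)
    · rw [sup_add, add_sup, add_sup]
      refine sup_le (sup_le le_sup_left ?_) (sup_le ?_ ?_)
      · simpa using ha
      · simpa using hb'
      · simp
  simpa only [posPart_def] using goal

private lemma negPart_add_disj {a b : E} (h : |a| ⊓ |b| = 0) : (a + b)⁻ = a⁻ + b⁻ := by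
  have h' : |(-a)| ⊓ |(-b)| = 0 := by rwa [abs_neg, abs_neg]
  have h2 := posPart_add_disj h'
  rw [← posPart_neg, neg_add, h2, posPart_neg, posPart_neg]

private lemma abs_add_disj {a b : E} (h : |a| ⊓ |b| = 0) : |a + b| = |a| + |b| := by
  rw [← posPart_add_negPart (a + b), posPart_add_disj h, negPart_add_disj h,
    ← posPart_add_negPart a, ← posPart_add_negPart b]
  abel

private lemma abs_sub_disj {p q : E} (hp : 0 ≤ p) (hq : 0 ≤ q) (h : p ⊓ q = 0) :
    |p - q| = p + q := by
  have h' : |p| ⊓ |(-q)| = 0 := by rwa [abs_of_nonneg hp, abs_neg, abs_of_nonneg hq]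
  rw [sub_eq_add_neg, abs_add_disj h', abs_of_nonneg hp, abs_neg, abs_of_nonneg hq]

private lemma inf_add_le_disj {p q r : E} (hp : 0 ≤ p) (hq : 0 ≤ q) (hr : 0 ≤ r) :
    p ⊓ (q + r) ≤ p ⊓ q + p ⊓ r := by
  rw [← sub_le_iff_le_add']
  have e : p ⊓ (q + r) - p ⊓ q = (p ⊓ (q + r) - p) ⊔ (p ⊓ (q + r) - q) := by
    rw [sub_eq_add_neg, neg_inf, add_sup, ← sub_eq_add_neg, ← sub_eq_add_neg]
  rw [e]
  refine sup_le (le_inf ?_ ?_) (le_inf ?_ ?_)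
  · exact le_trans (sub_nonpos.mpr inf_le_left) hp
  · exact le_trans (sub_nonpos.mpr inf_le_left) hr
  · exact sub_le_iff_le_add.mpr (le_trans inf_le_left (le_add_of_nonneg_right hq))
  · rw [sub_le_iff_le_add, add_comm]; exact inf_le_right

private lemma inf_add_disj {p q r : E} (hp : 0 ≤ p) (hq : 0 ≤ q) (hr : 0 ≤ r)
    (hqr : q ⊓ r = 0) : p ⊓ (q + r) = p ⊓ q + p ⊓ r := by
  refine le_antisymm (inf_add_le_disj hp hq hr) ?_
  have h0 : (p ⊓ q) ⊓ (p ⊓ r) = 0 :=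
    inf_eq_zero_of_le (le_inf hp hq) (le_inf hp hr) inf_le_right inf_le_right hqr
  have e : p ⊓ q + p ⊓ r = (p ⊓ q) ⊔ (p ⊓ r) := by
    rw [← inf_add_sup (p ⊓ q) (p ⊓ r), h0, zero_add]
  rw [e]
  exact sup_le (le_inf inf_le_left (le_trans inf_le_right (le_add_of_nonneg_right hr)))
    (le_inf inf_le_left (le_trans inf_le_right (le_add_of_nonneg_left hq)))

private lemma inf_add_add_eq_zero {a₁ a₂ b₁ b₂ : E} (ha₁ : 0 ≤ a₁) (ha₂ : 0 ≤ a₂)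
    (hb₁ : 0 ≤ b₁) (hb₂ : 0 ≤ b₂) (h11 : a₁ ⊓ b₁ = 0) (h12 : a₁ ⊓ b₂ = 0)
    (h21 : a₂ ⊓ b₁ = 0) (h22 : a₂ ⊓ b₂ = 0) : (a₁ + a₂) ⊓ (b₁ + b₂) = 0 := by
  have ha : (0 : E) ≤ a₁ + a₂ := add_nonneg ha₁ ha₂
  refine le_antisymm ?_ (le_inf ha (add_nonneg hb₁ hb₂))
  have c1 : (a₁ + a₂) ⊓ b₁ ≤ a₁ ⊓ b₁ + a₂ ⊓ b₁ := by
    rw [inf_comm (a₁ + a₂) b₁, inf_comm a₁ b₁, inf_comm a₂ b₁]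
    exact inf_add_le_disj hb₁ ha₁ ha₂
  have c2 : (a₁ + a₂) ⊓ b₂ ≤ a₁ ⊓ b₂ + a₂ ⊓ b₂ := by
    rw [inf_comm (a₁ + a₂) b₂, inf_comm a₁ b₂, inf_comm a₂ b₂]
    exact inf_add_le_disj hb₂ ha₁ ha₂
  calc (a₁ + a₂) ⊓ (b₁ + b₂) ≤ (a₁ + a₂) ⊓ b₁ + (a₁ + a₂) ⊓ b₂ :=
        inf_add_le_disj ha hb₁ hb₂
    _ ≤ (a₁ ⊓ b₁ + a₂ ⊓ b₁) + (a₁ ⊓ b₂ + a₂ ⊓ b₂) := add_le_add c1 c2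
    _ = 0 := by rw [h11, h12, h21, h22]; simp

/-! ### Fragments -/

private lemma posPart_add_sub {z x : E} (hz : IsFragment z x) : x⁺ = z⁺ + (x - z)⁺ := by
  have hz' : |z| ⊓ |x - z| = 0 := hz
  have h := posPart_add_disj hz'
  rwa [show z + (x - z) = x by abel] at h

private lemma negPart_add_sub {z x : E} (hz : IsFragment z x) : x⁻ = z⁻ + (x - z)⁻ := by
  have hz' : |z| ⊓ |x - z| = 0 := hz
  have h := negPart_add_disj hz'
  rwa [show z + (x - z) = x by abel] at h

private lemma isFragment_abs_le {z x : E} (h : IsFragment z x) : |z| ≤ |x| := by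
  have hz' : |z| ⊓ |x - z| = 0 := h
  have e := abs_add_disj hz'
  rw [show z + (x - z) = x by abel] at e
  rw [e]
  exact le_add_of_nonneg_right (abs_nonneg _)

private lemma posPart_inf_decomp {a b z : E} (hab : |a| ⊓ |b| = 0)
    (hz : IsFragment z (a + b)) : z⁺ = z⁺ ⊓ a⁺ + z⁺ ⊓ b⁺ := by
  have hx1 := posPart_add_sub hz
  have hx2 : (a + b)⁺ = a⁺ + b⁺ := posPart_add_disj hab
  have hzple : z⁺ ≤ a⁺ + b⁺ := by
    rw [← hx2, hx1]; exact le_add_of_nonneg_right (posPart_nonneg _)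
  have hab' : a⁺ ⊓ b⁺ = 0 :=
    inf_eq_zero_of_le (posPart_nonneg a) (posPart_nonneg b)
      (posPart_le_abs' a) (posPart_le_abs' b) hab
  have h := inf_add_disj (posPart_nonneg z) (posPart_nonneg a) (posPart_nonneg b) hab'
  rwa [inf_eq_left.mpr hzple] at h

private lemma negPart_inf_decomp {a b z : E} (hab : |a| ⊓ |b| = 0)
    (hz : IsFragment z (a + b)) : z⁻ = z⁻ ⊓ a⁻ + z⁻ ⊓ b⁻ := by
  have hab' : |(-a)| ⊓ |(-b)| = 0 := by rwa [abs_neg, abs_neg]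
  have hz' : IsFragment (-z) (-a + -b) := by
    have e : -a + -b - -z = -(a + b - z) := by abel
    show |(-z)| ⊓ |(-a + -b - -z)| = 0
    rw [e, abs_neg, abs_neg]
    exact hz
  have h := posPart_inf_decomp hab' hz'
  simpa [posPart_neg] using h

private lemma frag_component {a b z : E} (hab : |a| ⊓ |b| = 0)
    (hz : IsFragment z (a + b)) :
    IsFragment (z⁺ ⊓ a⁺ - z⁻ ⊓ a⁻) a ∧ |z⁺ ⊓ a⁺ - z⁻ ⊓ a⁻| ≤ |a| := by
  have hz' : |z| ⊓ |a + b - z| = 0 := hz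
  have hz1 := posPart_inf_decomp hab hz
  have hz2 := negPart_inf_decomp hab hz
  have hq₁0 : (0 : E) ≤ z⁺ ⊓ a⁺ := le_inf (posPart_nonneg z) (posPart_nonneg a)
  have hq₂0 : (0 : E) ≤ z⁻ ⊓ a⁻ := le_inf (negPart_nonneg z) (negPart_nonneg a)
  have hq12 : (z⁺ ⊓ a⁺) ⊓ (z⁻ ⊓ a⁻) = 0 :=
    inf_eq_zero_of_le hq₁0 hq₂0 inf_le_left inf_le_left (posPart_inf_negPart_eq_zero z)
  have habs_u : |z⁺ ⊓ a⁺ - z⁻ ⊓ a⁻| = z⁺ ⊓ a⁺ + z⁻ ⊓ a⁻ := abs_sub_disj hq₁0 hq₂0 hq12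
  have hp₁0 : (0 : E) ≤ a⁺ - z⁺ ⊓ a⁺ := sub_nonneg.mpr inf_le_right
  have hp₂0 : (0 : E) ≤ a⁻ - z⁻ ⊓ a⁻ := sub_nonneg.mpr inf_le_right
  have hp₁a : a⁺ - z⁺ ⊓ a⁺ ≤ a⁺ := sub_le_self _ hq₁0
  have hp₂a : a⁻ - z⁻ ⊓ a⁻ ≤ a⁻ := sub_le_self _ hq₂0
  have hp12 : (a⁺ - z⁺ ⊓ a⁺) ⊓ (a⁻ - z⁻ ⊓ a⁻) = 0 :=
    inf_eq_zero_of_le hp₁0 hp₂0 hp₁a hp₂a (posPart_inf_negPart_eq_zero a)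
  have hau : a - (z⁺ ⊓ a⁺ - z⁻ ⊓ a⁻) = (a⁺ - z⁺ ⊓ a⁺) - (a⁻ - z⁻ ⊓ a⁻) := by
    rw [sub_sub_sub_comm, posPart_sub_negPart]
  have habs_au : |a - (z⁺ ⊓ a⁺ - z⁻ ⊓ a⁻)| = (a⁺ - z⁺ ⊓ a⁺) + (a⁻ - z⁻ ⊓ a⁻) := by
    rw [hau]; exact abs_sub_disj hp₁0 hp₂0 hp12
  -- the positive remainder is dominated by (a+b-z)⁺
  have hw₁ : a⁺ - z⁺ ⊓ a⁺ ≤ (a + b - z)⁺ := by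
    rw [← add_le_add_iff_right z⁺]
    have e1 : a⁺ - z⁺ ⊓ a⁺ + z⁺ = a⁺ + z⁺ ⊓ b⁺ := by
      nth_rewrite 2 [hz1]; abel
    have e2 : z⁺ + (a + b - z)⁺ = a⁺ + b⁺ := by
      rw [← posPart_add_sub hz]; exact posPart_add_disj hab
    rw [e1]
    calc a⁺ + z⁺ ⊓ b⁺ ≤ a⁺ + b⁺ := add_le_add_right inf_le_right a⁺
      _ = (a + b - z)⁺ + z⁺ := by rw [← e2]; exact add_comm _ _
  have hw₂ : a⁻ - z⁻ ⊓ a⁻ ≤ (a + b - z)⁻ := by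
    rw [← add_le_add_iff_right z⁻]
    have e1 : a⁻ - z⁻ ⊓ a⁻ + z⁻ = a⁻ + z⁻ ⊓ b⁻ := by
      nth_rewrite 2 [hz2]; abel
    have e2 : z⁻ + (a + b - z)⁻ = a⁻ + b⁻ := by
      rw [← negPart_add_sub hz]; exact negPart_add_disj hab
    rw [e1]
    calc a⁻ + z⁻ ⊓ b⁻ ≤ a⁻ + b⁻ := add_le_add_right inf_le_right a⁻
      _ = (a + b - z)⁻ + z⁻ := by rw [← e2]; exact add_comm _ _
  have h11 : (z⁺ ⊓ a⁺) ⊓ (a⁺ - z⁺ ⊓ a⁺) = 0 :=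
    inf_eq_zero_of_le hq₁0 hp₁0 (le_trans inf_le_left (posPart_le_abs' z))
      (le_trans hw₁ (posPart_le_abs' _)) hz'
  have h12 : (z⁺ ⊓ a⁺) ⊓ (a⁻ - z⁻ ⊓ a⁻) = 0 :=
    inf_eq_zero_of_le hq₁0 hp₂0 inf_le_right hp₂a (posPart_inf_negPart_eq_zero a)
  have h21 : (z⁻ ⊓ a⁻) ⊓ (a⁺ - z⁺ ⊓ a⁺) = 0 :=
    inf_eq_zero_of_le hq₂0 hp₁0 inf_le_right hp₁a
      (by rw [inf_comm]; exact posPart_inf_negPart_eq_zero a)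
  have h22 : (z⁻ ⊓ a⁻) ⊓ (a⁻ - z⁻ ⊓ a⁻) = 0 :=
    inf_eq_zero_of_le hq₂0 hp₂0 (le_trans inf_le_left (negPart_le_abs' z))
      (le_trans hw₂ (negPart_le_abs' _)) hz'
  constructor
  · show |z⁺ ⊓ a⁺ - z⁻ ⊓ a⁻| ⊓ |a - (z⁺ ⊓ a⁺ - z⁻ ⊓ a⁻)| = 0
    rw [habs_u, habs_au]
    exact inf_add_add_eq_zero hq₁0 hq₂0 hp₁0 hp₂0 h11 h12 h21 h22
  · rw [habs_u, ← posPart_add_negPart a]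
    exact add_le_add inf_le_right inf_le_right

private lemma frag_split {a b z : E} (hab : |a| ⊓ |b| = 0) (hz : IsFragment z (a + b)) :
    ∃ u v : E, IsFragment u a ∧ |u| ≤ |a| ∧ IsFragment v b ∧ |v| ≤ |b| ∧ z = u + v := by
  obtain ⟨h1, h2⟩ := frag_component hab hz
  have hab' : |b| ⊓ |a| = 0 := by rwa [inf_comm] at hab
  have hz' : IsFragment z (b + a) := by rw [add_comm b a]; exact hz
  obtain ⟨h3, h4⟩ := frag_component hab' hz'
  refine ⟨_, _, h1, h2, h3, h4, ?_⟩
  have e1 := posPart_inf_decomp hab hz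
  have e2 := negPart_inf_decomp hab hz
  calc z = z⁺ - z⁻ := (posPart_sub_negPart z).symm
    _ = (z⁺ ⊓ a⁺ - z⁻ ⊓ a⁻) + (z⁺ ⊓ b⁺ - z⁻ ⊓ b⁻) := by
        nth_rewrite 1 [e1]; nth_rewrite 1 [e2]; abel

/-! ### Sums over finsets -/

private lemma sum_nonneg' {ι : Type*} (s : Finset ι) (f : ι → E) (h : ∀ i ∈ s, 0 ≤ f i) :
    0 ≤ ∑ i ∈ s, f i := by
  classical
  induction s using Finset.induction_on with
  | empty => simp
  | @insert a s ha ih =>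
    rw [Finset.sum_insert ha]
    exact add_nonneg (h a (Finset.mem_insert_self a s))
      (ih fun i hi => h i (Finset.mem_insert_of_mem hi))

private lemma single_le_sum' {ι : Type*} (s : Finset ι) (f : ι → E) (h : ∀ i ∈ s, 0 ≤ f i)
    {n : ι} (hn : n ∈ s) : f n ≤ ∑ i ∈ s, f i := by
  classical
  rw [← Finset.sum_erase_add s f hn]
  exact le_add_of_nonneg_left (sum_nonneg' _ _ fun i hi => h i (Finset.mem_of_mem_erase hi))

private lemma inf_sum_eq_zero {ι : Type*} {p : E} (hp : 0 ≤ p) (s : Finset ι) (q : ι → E)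
    (hq : ∀ n ∈ s, 0 ≤ q n) (h : ∀ n ∈ s, p ⊓ q n = 0) : p ⊓ ∑ n ∈ s, q n = 0 := by
  classical
  induction s using Finset.induction_on with
  | empty => simpa using inf_eq_right.mpr hp
  | @insert a s ha ih =>
    rw [Finset.sum_insert ha]
    have hqa : 0 ≤ q a := hq a (Finset.mem_insert_self a s)
    have hqs : 0 ≤ ∑ n ∈ s, q n := sum_nonneg' s q fun n hn => hq n (Finset.mem_insert_of_mem hn)
    refine le_antisymm ?_ (le_inf hp (add_nonneg hqa hqs))
    calc p ⊓ (q a + ∑ n ∈ s, q n) ≤ p ⊓ q a + p ⊓ ∑ n ∈ s, q n :=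
          inf_add_le_disj hp hqa hqs
      _ = 0 := by
          rw [h a (Finset.mem_insert_self a s),
            ih (fun n hn => hq n (Finset.mem_insert_of_mem hn))
              (fun n hn => h n (Finset.mem_insert_of_mem hn)), add_zero]

private lemma abs_sum_disj {ι : Type*} (s : Finset ι) (h : ι → E)
    (hd : ∀ m ∈ s, ∀ n ∈ s, m ≠ n → |h m| ⊓ |h n| = 0) :
    |∑ n ∈ s, h n| = ∑ n ∈ s, |h n| := by
  classical
  induction s using Finset.induction_on with
  | empty => simp
  | @insert a s ha ih =>
    have hd' : ∀ m ∈ s, ∀ n ∈ s, m ≠ n → |h m| ⊓ |h n| = 0 := fun m hm n hn hmn =>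
      hd m (Finset.mem_insert_of_mem hm) n (Finset.mem_insert_of_mem hn) hmn
    have ihs := ih hd'
    have hdisj : |h a| ⊓ |∑ n ∈ s, h n| = 0 := by
      rw [ihs]
      exact inf_sum_eq_zero (abs_nonneg _) s _ (fun n _ => abs_nonneg _)
        (fun n hn => hd a (Finset.mem_insert_self a s) n (Finset.mem_insert_of_mem hn)
          (by intro e; subst e; exact ha hn))
    rw [Finset.sum_insert ha, Finset.sum_insert ha, abs_add_disj hdisj, ihs]

private lemma frag_sum_split (s : Finset ℕ) (h : ℕ → E)
    (hd : ∀ m ∈ s, ∀ n ∈ s, m ≠ n → |h m| ⊓ |h n| = 0) (z : E)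
    (hz : IsFragment z (∑ n ∈ s, h n)) :
    ∃ g : ℕ → E, (∀ n ∈ s, IsFragment (g n) (h n)) ∧ (∀ n ∈ s, |g n| ≤ |h n|) ∧
      z = ∑ n ∈ s, g n := by
  classical
  induction s using Finset.induction_on generalizing z with
  | empty =>
    refine ⟨fun _ => 0, by simp, by simp, ?_⟩
    have h0 : |z| ⊓ |(∑ n ∈ (∅ : Finset ℕ), h n) - z| = 0 := hz
    have h1 : |z| = 0 := by simpa using h0
    simpa using abs_eq_zero' h1
  | @insert a s ha ih =>
    have hd' : ∀ m ∈ s, ∀ n ∈ s, m ≠ n → |h m| ⊓ |h n| = 0 := fun m hm n hn hmn =>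
      hd m (Finset.mem_insert_of_mem hm) n (Finset.mem_insert_of_mem hn) hmn
    have hdisj : |h a| ⊓ |∑ n ∈ s, h n| = 0 := by
      rw [abs_sum_disj s h hd']
      exact inf_sum_eq_zero (abs_nonneg _) s _ (fun n _ => abs_nonneg _)
        (fun n hn => hd a (Finset.mem_insert_self a s) n (Finset.mem_insert_of_mem hn)
          (by intro e; subst e; exact ha hn))
    rw [Finset.sum_insert ha] at hz
    obtain ⟨u, v, hu, hule, hv, hvle, rfl⟩ := frag_split hdisj hz
    obtain ⟨g, hg1, hg2, hveq⟩ := ih hd' v hv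
    refine ⟨Function.update g a u, ?_, ?_, ?_⟩
    · intro n hn
      rcases Finset.mem_insert.mp hn with rfl | hn'
      · rw [Function.update_self]; exact hu
      · rw [Function.update_of_ne (by intro e; subst e; exact ha hn')]; exact hg1 n hn'
    · intro n hn
      rcases Finset.mem_insert.mp hn with rfl | hn'
      · rw [Function.update_self]; exact hule
      · rw [Function.update_of_ne (by intro e; subst e; exact ha hn')]; exact hg2 n hn'
    · rw [Finset.sum_insert ha, Function.update_self, hveq]
      congr 1
      exact Finset.sum_congr rfl fun n hn =>
        (Function.update_of_ne (by intro e; subst e; exact ha hn) u g).symm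

/-! ### Representation conversion -/

private lemma mem_finRep_iff (D : ℕ → Set E) (z : E) :
    (∃ (k : ℕ) (ind : Fin k → ℕ) (f : Fin k → E),
        Function.Injective ind ∧ (∀ i, f i ∈ D (ind i)) ∧
        (∀ i j, i ≠ j → |f i| ⊓ |f j| = 0) ∧ z = ∑ i, f i) ↔
    (∃ (s : Finset ℕ) (h : ℕ → E), (∀ n ∈ s, h n ∈ D n) ∧
        (∀ m ∈ s, ∀ n ∈ s, m ≠ n → |h m| ⊓ |h n| = 0) ∧ z = ∑ n ∈ s, h n) := by
  classical
  constructor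
  · rintro ⟨k, ind, f, hinj, hmem, hdisj, rfl⟩
    refine ⟨Finset.univ.image ind, Function.extend ind f (fun _ => 0), ?_, ?_, ?_⟩
    · intro n hn
      obtain ⟨i, _, rfl⟩ := Finset.mem_image.mp hn
      rw [hinj.extend_apply]
      exact hmem i
    · intro m hm n hn hmn
      obtain ⟨i, _, rfl⟩ := Finset.mem_image.mp hm
      obtain ⟨j, _, rfl⟩ := Finset.mem_image.mp hn
      rw [hinj.extend_apply, hinj.extend_apply]
      exact hdisj i j (by intro e; subst e; exact hmn rfl)
    · rw [Finset.sum_image (fun i _ j _ e => hinj e)]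
      exact (Finset.sum_congr rfl fun i _ => hinj.extend_apply f (fun _ => 0) i).symm
  · rintro ⟨s, h, hmem, hdisj, rfl⟩
    have hinj : Function.Injective (fun i : Fin s.card => ((s.orderIsoOfFin rfl i : ℕ))) :=
      fun i j e => (s.orderIsoOfFin rfl).toEquiv.injective (Subtype.coe_injective e)
    refine ⟨s.card, fun i => (s.orderIsoOfFin rfl i : ℕ),
      fun i => h (s.orderIsoOfFin rfl i : ℕ), hinj, ?_, ?_, ?_⟩
    · intro i
      exact hmem _ (s.orderIsoOfFin rfl i).2
    · intro i j hij
      exact hdisj _ (s.orderIsoOfFin rfl i).2 _ (s.orderIsoOfFin rfl j).2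
        (by intro e; exact hij (hinj e))
    · rw [← Finset.sum_coe_sort s h]
      exact (Fintype.sum_equiv (s.orderIsoOfFin rfl).toEquiv _ _ (fun i => rfl)).symm

/-- given a sequence of mutually disjoint lateral ideals `D n`, the set
of all finite sums `x₁ + ⋯ + x_k` of pairwise disjoint elements with `x i ∈ D (n i)`
for distinct indices `n i` is again a lateral ideal. -/
theorem disjoint_union_lateralIdeal (D : ℕ → Set E)
    (hD : ∀ n, IsLateralIdeal (D n))
    (hdisj : ∀ m n, m ≠ n → ∀ x ∈ D m, ∀ y ∈ D n, |x| ⊓ |y| = 0) :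
    IsLateralIdeal
      {z : E | ∃ (k : ℕ) (ind : Fin k → ℕ) (f : Fin k → E),
        Function.Injective ind ∧
        (∀ i, f i ∈ D (ind i)) ∧
        (∀ i j, i ≠ j → |f i| ⊓ |f j| = 0) ∧
        z = ∑ i, f i} := by
  constructor
  · -- closed under fragments
    intro x hx z hz
    simp only [Set.mem_setOf_eq] at hx ⊢
    rw [mem_finRep_iff] at hx ⊢
    obtain ⟨s, h, hmem, hdisj', rfl⟩ := hx
    obtain ⟨g, hg1, hg2, rfl⟩ := frag_sum_split s h hdisj' z hz
    exact ⟨s, g, fun n hn => (hD n).1 (h n) (hmem n hn) (g n) (hg1 n hn),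
      fun m hm n hn hmn => inf_eq_zero_of_le (abs_nonneg _) (abs_nonneg _)
        (hg2 m hm) (hg2 n hn) (hdisj' m hm n hn hmn), rfl⟩
  · -- closed under disjoint sums
    intro x hx y hy hxy
    simp only [Set.mem_setOf_eq] at hx hy ⊢
    rw [mem_finRep_iff] at hx hy ⊢
    obtain ⟨s, h, hs_mem, hs_disj, rfl⟩ := hx
    obtain ⟨t, g, ht_mem, ht_disj, rfl⟩ := hy
    classical
    have hbound_h : ∀ n ∈ s, |h n| ≤ |∑ n ∈ s, h n| := by
      intro n hn
      rw [abs_sum_disj s h hs_disj]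
      exact single_le_sum' s _ (fun i _ => abs_nonneg (h i)) hn
    have hbound_g : ∀ n ∈ t, |g n| ≤ |∑ n ∈ t, g n| := by
      intro n hn
      rw [abs_sum_disj t g ht_disj]
      exact single_le_sum' t _ (fun i _ => abs_nonneg (g i)) hn
    have cross : ∀ m ∈ s, ∀ n ∈ t, |h m| ⊓ |g n| = 0 := fun m hm n hn =>
      inf_eq_zero_of_le (abs_nonneg _) (abs_nonneg _) (hbound_h m hm) (hbound_g n hn) hxy
    have key : ∀ (P Q : Prop) [Decidable P] [Decidable Q] (a b : E),
        (P → Q → |a| ⊓ |b| = 0) → |if P then a else 0| ⊓ |if Q then b else 0| = 0 := by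
      intro P Q _ _ a b hab
      split_ifs with h1 h2 h2
      · exact hab h1 h2
      · simp only [abs_zero]; exact inf_eq_right.mpr (abs_nonneg _)
      · simp only [abs_zero]; exact inf_eq_left.mpr (abs_nonneg _)
      · simp
    refine ⟨s ∪ t, fun n => (if n ∈ s then h n else 0) + (if n ∈ t then g n else 0),
      ?_, ?_, ?_⟩
    · intro n hn
      by_cases hns : n ∈ s <;> by_cases hnt : n ∈ t
      · simp only [if_pos hns, if_pos hnt]
        exact (hD n).2 (h n) (hs_mem n hns) (g n) (ht_mem n hnt) (cross n hns n hnt)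
      · simp only [if_pos hns, if_neg hnt, add_zero]
        exact hs_mem n hns
      · simp only [if_neg hns, if_pos hnt, zero_add]
        exact ht_mem n hnt
      · exact absurd (Finset.mem_union.mp hn) (by simp [hns, hnt])
    · intro m hm n hn hmn
      have z1 : |if m ∈ s then h m else 0| ⊓ |if n ∈ s then h n else 0| = 0 :=
        key _ _ _ _ (fun hm' hn' => hs_disj m hm' n hn' hmn)
      have z2 : |if m ∈ s then h m else 0| ⊓ |if n ∈ t then g n else 0| = 0 :=
        key _ _ _ _ (fun hm' hn' => cross m hm' n hn')
      have z3 : |if m ∈ t then g m else 0| ⊓ |if n ∈ s then h n else 0| = 0 :=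
        key _ _ _ _ (fun hm' hn' => by rw [inf_comm]; exact cross n hn' m hm')
      have z4 : |if m ∈ t then g m else 0| ⊓ |if n ∈ t then g n else 0| = 0 :=
        key _ _ _ _ (fun hm' hn' => ht_disj m hm' n hn' hmn)
      have hz0 := inf_add_add_eq_zero (abs_nonneg _) (abs_nonneg _) (abs_nonneg _)
        (abs_nonneg _) z1 z2 z3 z4
      exact le_antisymm
        (le_trans (inf_le_inf (abs_add_le _ _) (abs_add_le _ _)) hz0.le)
        (le_inf (abs_nonneg _) (abs_nonneg _))
    · rw [Finset.sum_add_distrib, Finset.sum_ite_mem, Finset.sum_ite_mem,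
        Finset.union_inter_cancel_left, Finset.union_inter_cancel_right]
end

section
/- A map T : ℝⁿ → ℝᵐ is an abstract Uryson operator if and only if there exist functions T_{i,j} : ℝ → ℝ (1 ≤ i ≤ m, 1 ≤ j ≤ n) with T_{i,j}(0) = 0 that map bounded intervals to bounded sets, such that the i-th coordinate of T(x₁,…,xₙ) equals Σ_{j=1}^n T_{i,j}(x_j). -/
/-! A vector `x ∈ ℝⁿ` is the sum of the pairwise disjoint vectors `x_j e_j`, so an orthogonally
additive `T` with `T 0 = 0` satisfies `T x = ∑ⱼ T (x_j e_j)`; the coordinates of `r ↦ T (r e_j)`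
are the functions `T_{i,j}`, and order boundedness of `T` on boxes is equivalent to boundedness
of these scalar functions on intervals. Conversely, two reals are disjoint only if one of them
vanishes, so every `x ↦ (∑ⱼ T_{i,j}(x_j))ᵢ` with `T_{i,j}(0) = 0` is orthogonally additive. -/

def IsOrthAdd {E X : Type*} [Lattice E] [AddCommGroup E] [AddCommGroup X]
    (T : E → X) : Prop :=
  ∀ x y : E, |x| ⊓ |y| = 0 → T (x + y) = T x + T y

def IsOrderBounded {E F : Type*} [Preorder E] [Preorder F] (T : E → F) : Prop :=
  ∀ a b : E, ∃ c d : F, ∀ x : E, a ≤ x → x ≤ b → c ≤ T x ∧ T x ≤ d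

section LinearOrderedGroup

variable {α : Type*} [AddCommGroup α] [LinearOrder α] [IsOrderedAddMonoid α]

theorem eq_zero_or_eq_zero_of_abs_inf_abs_eq_zero {x y : α} (h : |x| ⊓ |y| = 0) :
    x = 0 ∨ y = 0 := by
  rcases min_choice |x| |y| with hmin | hmin
  · exact Or.inl (abs_eq_zero.mp (hmin ▸ h))
  · exact Or.inr (abs_eq_zero.mp (hmin ▸ h))

theorem isOrderBounded_pi_iff {E ι : Type*} [Preorder E] (T : E → ι → α) :
    IsOrderBounded T ↔ ∀ a b : E, ∃ C : ι → α, ∀ x, a ≤ x → x ≤ b → ∀ i, |T x i| ≤ C i := by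
  refine ⟨fun hT a b => ?_, fun hT a b => ?_⟩
  · obtain ⟨c, d, hcd⟩ := hT a b
    exact ⟨fun i => max (-c i) (d i), fun x hax hxb i => abs_le.mpr
      ⟨neg_le.mpr (le_max_of_le_left (neg_le_neg ((hcd x hax hxb).1 i))),
        ((hcd x hax hxb).2 i).trans (le_max_right _ _)⟩⟩
  · obtain ⟨C, hC⟩ := hT a b
    exact ⟨-C, C, fun x hax hxb =>
      ⟨fun i => neg_le_of_abs_le (hC x hax hxb i), fun i => le_of_abs_le (hC x hax hxb i)⟩⟩

end LinearOrderedGroup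

theorem abs_single_inf_abs_eq_zero {ι α : Type*} [DecidableEq ι] [Lattice α] [AddCommGroup α]
    [IsOrderedAddMonoid α] {j : ι} (r : α) {f : ι → α} (hf : f j = 0) :
    |Pi.single j r| ⊓ |f| = 0 := by
  funext k
  by_cases hk : k = j
  · subst hk
    simp only [Pi.inf_apply, Pi.abs_apply, hf, abs_zero, Pi.zero_apply]
    exact inf_eq_right.mpr (abs_nonneg _)
  · simp only [Pi.inf_apply, Pi.abs_apply, Pi.single_eq_of_ne hk, abs_zero, Pi.zero_apply]
    exact inf_eq_left.mpr (abs_nonneg _)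

namespace IsOrthAdd

variable {X : Type*} [AddCommGroup X]

theorem map_zero {E : Type*} [Lattice E] [AddCommGroup E] [IsOrderedAddMonoid E] {T : E → X}
    (hT : IsOrthAdd T) : T 0 = 0 := by
  simpa using hT 0 0 (by simp)

variable {ι α : Type*} [DecidableEq ι] [Lattice α] [AddCommGroup α] [IsOrderedAddMonoid α]
  {T : (ι → α) → X}

theorem map_sum_single (hT : IsOrthAdd T) (x : ι → α) (s : Finset ι) :
    T (∑ j ∈ s, Pi.single j (x j)) = ∑ j ∈ s, T (Pi.single j (x j)) := by
  induction s using Finset.induction with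
  | empty => simpa using hT.map_zero
  | @insert a s ha ih =>
    have hdisj : |Pi.single a (x a)| ⊓ |∑ j ∈ s, Pi.single j (x j)| = 0 :=
      abs_single_inf_abs_eq_zero _ <| by
        rw [Finset.sum_apply]
        exact Finset.sum_eq_zero fun j hj => Pi.single_eq_of_ne (by rintro rfl; exact ha hj) _
    rw [Finset.sum_insert ha, Finset.sum_insert ha, hT _ _ hdisj, ih]

theorem map_eq_sum_single [Fintype ι] (hT : IsOrthAdd T) (x : ι → α) :
    T x = ∑ j, T (Pi.single j (x j)) := by
  conv_lhs => rw [← Finset.univ_sum_single x]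
  exact hT.map_sum_single x Finset.univ

end IsOrthAdd

section Matrix

variable {ι κ α : Type*} [Fintype ι] [AddCommGroup α] [LinearOrder α] [IsOrderedAddMonoid α]

def matrixUryson (K : κ → ι → α → α) (x : ι → α) : κ → α :=
  fun i => ∑ j, K i j (x j)

theorem isOrthAdd_matrixUryson {K : κ → ι → α → α} (hK : ∀ i j, K i j 0 = 0) :
    IsOrthAdd (matrixUryson K) := by
  intro x y hxy
  funext i
  have hsplit : ∀ j, K i j (x j + y j) = K i j (x j) + K i j (y j) := fun j => by
    rcases eq_zero_or_eq_zero_of_abs_inf_abs_eq_zero (congrFun hxy j) with h | h <;>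
      simp [h, hK]
  simp only [matrixUryson, Pi.add_apply, hsplit, Finset.sum_add_distrib]

theorem isOrderBounded_matrixUryson {K : κ → ι → α → α}
    (hK : ∀ i j, ∀ a b : α, ∃ c : α, ∀ r : α, a ≤ r → r ≤ b → |K i j r| ≤ c) :
    IsOrderBounded (matrixUryson K) := by
  refine (isOrderBounded_pi_iff _).mpr fun a b => ?_
  choose c hc using fun i j => hK i j (a j) (b j)
  refine ⟨fun i => ∑ j, c i j, fun x hax hxb i => ?_⟩
  calc |∑ j, K i j (x j)| ≤ ∑ j, |K i j (x j)| := Finset.abs_sum_le_sum_abs _ _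
    _ ≤ ∑ j, c i j := Finset.sum_le_sum fun j _ => hc i j (x j) (hax j) (hxb j)

end Matrix

/-- `T : ℝⁿ → ℝᵐ` is an abstract Uryson operator iff it is given by a
matrix `(T i j)` of real functions vanishing at `0` and mapping bounded intervals to
bounded sets, via `(T x) i = Σ_j T i j (x j)`. -/
theorem uryson_iff_matrix (n m : ℕ) (T : (Fin n → ℝ) → (Fin m → ℝ)) :
    (IsOrthAdd T ∧ IsOrderBounded T) ↔
      ∃ Tm : Fin m → Fin n → ℝ → ℝ,
        (∀ i j, Tm i j 0 = 0) ∧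
        (∀ i j, ∀ a b : ℝ, ∃ c : ℝ, ∀ r : ℝ, a ≤ r → r ≤ b → |Tm i j r| ≤ c) ∧
        (∀ x : Fin n → ℝ, ∀ i : Fin m, T x i = ∑ j, Tm i j (x j)) := by
  constructor
  · rintro ⟨hadd, hbdd⟩
    refine ⟨fun i j r => T (Pi.single j r) i, fun i j => by simp [hadd.map_zero], ?_,
      fun x i => by rw [hadd.map_eq_sum_single x, Finset.sum_apply]⟩
    intro i j a b
    -- the box must contain `0` in its corners, since the other coordinates of `r e_j` vanish
    obtain ⟨C, hC⟩ := (isOrderBounded_pi_iff T).mp hbdd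
      (Pi.single j (min a 0)) (Pi.single j (max b 0))
    exact ⟨C i, fun r har hrb => hC _ (Pi.single_mono j (min_le_of_left_le har))
      (Pi.single_mono j (le_max_of_le_left hrb)) i⟩
  · rintro ⟨Tm, hzero, hbdd, hrep⟩
    obtain rfl : T = matrixUryson Tm := funext fun x => funext (hrep x)
    exact ⟨isOrthAdd_matrixUryson hzero, isOrderBounded_matrixUryson hbdd⟩
end

section
/- In the vector lattice U(ℝ) of abstract Uryson functionals f : ℝ → ℝ, the ideal of finite elements Φ₁(U(ℝ)) coincides with the set of all f ∈ U(ℝ) whose support {x : f(x) ≠ 0} is contained in a compact interval [a,b]. Moreover every finite element of U(ℝ) is totally finite. -/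
/-- Membership in `U(ℝ)`: `f 0 = 0` and `f` maps bounded sets to bounded sets. -/
def MemU (f : ℝ → ℝ) : Prop :=
  f 0 = 0 ∧ ∀ a b : ℝ, ∃ c : ℝ, ∀ x : ℝ, a ≤ x → x ≤ b → |f x| ≤ c

/-- `Z` is a majorant of the finite element `f` in `U(ℝ)` (lattice operations in
`U(ℝ)` are pointwise, since in `ℝ` the only fragments of `x` are `0` and `x`). -/
def MajorantU (Z f : ℝ → ℝ) : Prop :=
  MemU Z ∧ ∀ g : ℝ → ℝ, MemU g →
    ∃ c : ℝ, 0 < c ∧ ∀ (n : ℕ) (x : ℝ), min |g x| ((n : ℝ) * |f x|) ≤ c * Z x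

/-- `f` is a finite element of `U(ℝ)`. -/
def FiniteU (f : ℝ → ℝ) : Prop := MemU f ∧ ∃ Z : ℝ → ℝ, MajorantU Z f

/-!
A finite element `f` with majorant `Z` has bounded support: testing the majorant condition
against `g x = x * |Z x| + x`, which dominates every multiple `c * Z x` once `|x| > c`, and
choosing `n` with `n * |f x| > c * Z x`, forces `|x| ≤ c` wherever `f x ≠ 0`. Conversely, if the
support of `f` lies in `[a, b]`, the indicator of `[a, b] \ {0}` is a majorant of `f`, since every
`g ∈ U(ℝ)` is bounded on `[a, b]`; that indicator is a majorant of itself, hence finite.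
-/

open Set Function

section MemU

variable {f g : ℝ → ℝ}

lemma memU_id : MemU id :=
  ⟨rfl, fun a b => ⟨max |a| |b|, fun _ hax hxb => abs_le_max_abs_abs hax hxb⟩⟩

lemma MemU.add (hf : MemU f) (hg : MemU g) : MemU (fun x => f x + g x) := by
  refine ⟨by simp [hf.1, hg.1], fun a b => ?_⟩
  obtain ⟨cf, hcf⟩ := hf.2 a b
  obtain ⟨cg, hcg⟩ := hg.2 a b
  exact ⟨cf + cg, fun x hax hxb =>
    (abs_add_le _ _).trans (add_le_add (hcf x hax hxb) (hcg x hax hxb))⟩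

lemma MemU.mul (hf : MemU f) (hg : MemU g) : MemU (fun x => f x * g x) := by
  refine ⟨by simp [hf.1], fun a b => ?_⟩
  obtain ⟨cf, hcf⟩ := hf.2 a b
  obtain ⟨cg, hcg⟩ := hg.2 a b
  refine ⟨cf * cg, fun x hax hxb => ?_⟩
  rw [abs_mul]
  exact mul_le_mul (hcf x hax hxb) (hcg x hax hxb) (abs_nonneg _)
    ((abs_nonneg _).trans (hcf x hax hxb))

lemma MemU.abs (hf : MemU f) : MemU (fun x => |f x|) := by
  refine ⟨by simp [hf.1], fun a b => ?_⟩
  obtain ⟨c, hc⟩ := hf.2 a b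
  exact ⟨c, fun x hax hxb => (abs_abs (f x)).symm ▸ hc x hax hxb⟩

lemma memU_indicator_one {s : Set ℝ} (h0 : (0 : ℝ) ∉ s) : MemU (s.indicator 1) := by
  refine ⟨indicator_of_notMem h0 _, fun _ _ => ⟨1, fun x _ _ => ?_⟩⟩
  by_cases hx : x ∈ s <;> simp [hx]

end MemU

lemma MajorantU.support_subset_Icc {Z f : ℝ → ℝ} (hZ : MajorantU Z f) :
    ∃ c : ℝ, support f ⊆ Icc (-c) c := by
  have hg : MemU (fun x => x * |Z x| + x) := (memU_id.mul hZ.1.abs).add memU_id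
  obtain ⟨c, hc0, hc⟩ := hZ.2 _ hg
  refine ⟨c, fun x hx => abs_le.mp ?_⟩
  by_contra! hxc
  have hfx : 0 < |f x| := abs_pos.mpr hx
  have hg_large : c * Z x < |x * |Z x| + x| := by
    rw [← mul_add_one, abs_mul, abs_of_pos (by positivity : 0 < |Z x| + 1)]
    calc c * Z x ≤ c * |Z x| := mul_le_mul_of_nonneg_left (le_abs_self _) hc0.le
      _ ≤ |x| * |Z x| := mul_le_mul_of_nonneg_right hxc.le (abs_nonneg _)
      _ < |x| * (|Z x| + 1) := by rw [mul_add_one]; linarith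
  obtain ⟨n, hn⟩ := exists_nat_gt (c * Z x / |f x|)
  have hf_large : c * Z x < n * |f x| := (div_lt_iff₀ hfx).mp hn
  exact (lt_min hg_large hf_large).not_ge (hc n x)

lemma majorantU_indicator_one {s : Set ℝ} {f : ℝ → ℝ} {a b : ℝ} (hs : s ⊆ Icc a b)
    (h0 : (0 : ℝ) ∉ s) (hf : support f ⊆ s) : MajorantU (s.indicator 1) f := by
  refine ⟨memU_indicator_one h0, fun g hg => ?_⟩
  obtain ⟨cg, hcg⟩ := hg.2 a b
  refine ⟨max cg 1, by positivity, fun n x => ?_⟩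
  by_cases hx : x ∈ s
  · rw [indicator_of_mem hx, Pi.one_apply, mul_one]
    exact (min_le_left _ _).trans ((hcg x (hs hx).1 (hs hx).2).trans (le_max_left _ _))
  · simp [indicator_of_notMem hx, notMem_support.mp (mt (@hf x) hx)]

lemma finiteU_indicator_one {s : Set ℝ} {a b : ℝ} (hs : s ⊆ Icc a b) (h0 : (0 : ℝ) ∉ s) :
    FiniteU (s.indicator 1) :=
  ⟨memU_indicator_one h0, _, majorantU_indicator_one hs h0 support_indicator_subset⟩

lemma majorantU_indicator_Icc_sdiff_zero {f : ℝ → ℝ} {a b : ℝ} (hf0 : f 0 = 0)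
    (hs : support f ⊆ Icc a b) : MajorantU ((Icc a b \ {0}).indicator 1) f :=
  majorantU_indicator_one sdiff_subset (notMem_sdiff_of_mem rfl)
    fun _ hx => ⟨hs hx, fun h0 => hx (h0 ▸ hf0)⟩

/-- `Φ₁(U(ℝ))` consists exactly of those `f ∈ U(ℝ)` whose support is
contained in a compact interval; moreover every finite element is totally finite. -/
theorem finite_elements_of_U_real :
    (∀ f : ℝ → ℝ, FiniteU f ↔
      (MemU f ∧ ∃ a b : ℝ, ∀ x : ℝ, f x ≠ 0 → x ∈ Set.Icc a b)) ∧
    (∀ f : ℝ → ℝ, FiniteU f → ∃ Z : ℝ → ℝ, MajorantU Z f ∧ FiniteU Z) := by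
  refine ⟨fun f => ⟨fun ⟨hf, _, hZ⟩ => ?_, fun ⟨hf, a, b, hs⟩ => ?_⟩,
    fun f ⟨hf, _, hZ⟩ => ?_⟩
  · obtain ⟨c, hc⟩ := hZ.support_subset_Icc
    exact ⟨hf, -c, c, hc⟩
  · exact ⟨hf, _, majorantU_indicator_Icc_sdiff_zero hf.1 hs⟩
  · obtain ⟨c, hc⟩ := hZ.support_subset_Icc
    exact ⟨_, majorantU_indicator_Icc_sdiff_zero hf.1 hc,
      finiteU_indicator_one sdiff_subset (notMem_sdiff_of_mem rfl)⟩
end
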